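/- arXiv:2111.09012 — 3 statements merged into one kernel-verified Lean document; each statement's English description precedes it below -/
import Mathlib

section
/- Let ε ∈ (0,1] and let N, n be positive integers with n ≤ N. If h is a positive integer with h ≥ ln(2/√ε)·√(N/n), then n/N ≥ tanh²((1/h)·arcosh(1/√ε)), i.e. n/N ≥ 1 - sech²((1/h)·arcosh(1/√ε)). -/
noncomputable def arcosh (z : ℝ) : ℝ := Real.log (z + Real.sqrt (z ^ 2 - 1))

/-!
With `z = 1/√ε ≥ 1` we have `arcosh z = log (z + √(z² - 1)) ≤ log (2 z) = log (2/√ε)`, so the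
step condition gives `x := arcosh z / h ≤ √(n/N)`. Since `|tanh x| ≤ |x|` and
`1 - sech² x = tanh² x`, both bounds follow from `x² ≤ n/N`.
-/

namespace Real

theorem sinh_le_mul_cosh {x : ℝ} (hx : 0 ≤ x) : sinh x ≤ x * cosh x := by
  -- `x cosh x - sinh x` vanishes at `0` and has derivative `x sinh x ≥ 0` on `[0, ∞)`.
  have hmono : MonotoneOn (fun y ↦ y * cosh y - sinh y) (Set.Ici 0) := by
    refine monotoneOn_of_deriv_nonneg (convex_Ici 0) (by fun_prop) (by fun_prop) fun y hy ↦ ?_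
    rw [interior_Ici, Set.mem_Ioi] at hy
    have hderiv : deriv (fun y ↦ y * cosh y - sinh y) y = y * sinh y := by
      rw [deriv_fun_sub (by fun_prop) (by fun_prop), deriv_fun_mul (by fun_prop) (by fun_prop)]
      simp only [deriv_id'', deriv_cosh, deriv_sinh]
      ring
    rw [hderiv]
    exact mul_nonneg hy.le (sinh_nonneg_iff.2 hy.le)
  simpa using hmono Set.self_mem_Ici hx hx

theorem tanh_nonneg {x : ℝ} (hx : 0 ≤ x) : 0 ≤ tanh x := by
  rw [tanh_eq_sinh_div_cosh]
  exact div_nonneg (sinh_nonneg_iff.2 hx) (cosh_pos x).le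

theorem tanh_le_self {x : ℝ} (hx : 0 ≤ x) : tanh x ≤ x := by
  rw [tanh_eq_sinh_div_cosh, div_le_iff₀ (cosh_pos x)]
  exact sinh_le_mul_cosh hx

theorem tanh_sq_le_sq (x : ℝ) : tanh x ^ 2 ≤ x ^ 2 := by
  rcases le_total 0 x with hx | hx
  · exact pow_le_pow_left₀ (tanh_nonneg hx) (tanh_le_self hx) 2
  · have hx' : 0 ≤ -x := neg_nonneg.2 hx
    simpa only [tanh_neg, neg_sq] using pow_le_pow_left₀ (tanh_nonneg hx') (tanh_le_self hx') 2

theorem one_sub_inv_cosh_sq (x : ℝ) : 1 - (1 / cosh x) ^ 2 = tanh x ^ 2 := by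
  have hcosh := (cosh_pos x).ne'
  rw [tanh_eq_sinh_div_cosh, div_pow, div_pow, sinh_sq]
  field_simp

theorem arcosh_le_log_two_mul {z : ℝ} (hz : 0 < z) : arcosh z ≤ log (2 * z) := by
  have hsqrt : √(z ^ 2 - 1) ≤ z := (sqrt_le_sqrt (by linarith)).trans_eq (sqrt_sq hz.le)
  exact log_le_log (by positivity) (by linarith)

end Real

theorem sq_div_le_div_of_mul_sqrt_div_le {a t p q : ℝ} (hp : 0 < p) (hq : 0 < q) (ha : 0 ≤ a)
    (h : a * √(q / p) ≤ t) : (a / t) ^ 2 ≤ p / q := by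
  have ht : 0 ≤ t := (mul_nonneg ha (Real.sqrt_nonneg _)).trans h
  rw [div_pow]
  refine div_le_of_le_mul₀ (sq_nonneg t) (div_nonneg hp.le hq.le) ?_
  calc a ^ 2 = p / q * (a * √(q / p)) ^ 2 := by
        rw [mul_pow, Real.sq_sqrt (by positivity)]; field_simp
    _ ≤ p / q * t ^ 2 := by gcongr

theorem stmt_6_general (ε : ℝ) (hε : ε ∈ Set.Ioc (0 : ℝ) 1) (N n : ℕ) (hn : 0 < n) (hN : 0 < N)
    (h : ℕ)
    (hstep : Real.log (2 / Real.sqrt ε) * Real.sqrt ((N : ℝ) / n) ≤ (h : ℝ)) :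
    Real.tanh ((1 / (h : ℝ)) * arcosh (1 / Real.sqrt ε)) ^ 2 ≤ (n : ℝ) / N ∧
    1 - (1 / Real.cosh ((1 / (h : ℝ)) * arcosh (1 / Real.sqrt ε))) ^ 2 ≤ (n : ℝ) / N := by
  obtain ⟨hε0, hε1⟩ := hε
  have hsqrt : 0 < √ε := Real.sqrt_pos.2 hε0
  have hz : 1 ≤ 1 / √ε := one_le_one_div hsqrt (Real.sqrt_le_one.2 hε1)
  -- `arcosh` unfolds to `Real.arcosh`, so the library facts about the latter apply verbatim.
  have hx : ((1 / (h : ℝ)) * arcosh (1 / √ε)) ^ 2 ≤ (n : ℝ) / N := by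
    rw [one_div_mul_eq_div]
    refine sq_div_le_div_of_mul_sqrt_div_le (by positivity) (by positivity)
      (Real.arcosh_nonneg hz) (le_trans ?_ hstep)
    gcongr
    rw [div_eq_mul_one_div 2]
    exact Real.arcosh_le_log_two_mul (one_div_pos.2 hsqrt)
  rw [Real.one_sub_inv_cosh_sq]
  exact ⟨(Real.tanh_sq_le_sq _).trans hx, (Real.tanh_sq_le_sq _).trans hx⟩

theorem stmt_6 (ε : ℝ) (hε : ε ∈ Set.Ioc (0 : ℝ) 1) (N n : ℕ) (hn : 0 < n) (hN : 0 < N)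
    (hnN : n ≤ N) (h : ℕ) (hh : 0 < h)
    (hstep : Real.log (2 / Real.sqrt ε) * Real.sqrt ((N : ℝ) / n) ≤ (h : ℝ)) :
    Real.tanh ((1 / (h : ℝ)) * arcosh (1 / Real.sqrt ε)) ^ 2 ≤ (n : ℝ) / N ∧
    1 - (1 / Real.cosh ((1 / (h : ℝ)) * arcosh (1 / Real.sqrt ε))) ^ 2 ≤ (n : ℝ) / N :=
  stmt_6_general ε hε N n hn hN h hstep
end

section
/- Let ω ∈ ℝ, and define the 4×4 complex matrices C(α) = (entries) C₁₁ = C₄₄ = -e^{-iα}, C₂₂ = ((1-e^{-iα})(1-cos ω)/2) - 1, C₂₃ = C₃₂ = (1-e^{-iα}) sin(ω)/2, C₃₃ = ((1-e^{-iα})(1+cos ω)/2) - 1, zeros elsewhere; A(θ) as the 4×4 matrix with 1's at (1,1),(4,4), cos(ω/2) at (2,2),(3,3), -i e^{iθ} sin(ω/2) at (2,3), -i e^{-iθ} sin(ω/2) at (3,2); and R(α) = -diag(e^{-iα/2}, e^{iα/2}, e^{-iα/2}, e^{-iα/2}). Then C(α) = e^{-iα/2} A(π/2) R(α) A(-π/2)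 for all real α. -/
open Matrix

/-- The parameterized coin operator restricted to the invariant 4-dimensional subspace. -/
noncomputable def Cmat (ω α : ℝ) : Matrix (Fin 4) (Fin 4) ℂ :=
  !![-Complex.exp (-Complex.I * α), 0, 0, 0;
     0, (1 - Complex.exp (-Complex.I * α)) * ((1 - Real.cos ω : ℝ) : ℂ) / 2 - 1,
       (1 - Complex.exp (-Complex.I * α)) * ((Real.sin ω : ℝ) : ℂ) / 2, 0;
     0, (1 - Complex.exp (-Complex.I * α)) * ((Real.sin ω : ℝ) : ℂ) / 2,
       (1 - Complex.exp (-Complex.I * α)) * ((1 + Real.cos ω : ℝ) : ℂ) / 2 - 1, 0;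
     0, 0, 0, -Complex.exp (-Complex.I * α)]

/-- The 4×4 unitary `A(θ)` with rotation parameter `ω`. -/
noncomputable def Amat (ω θ : ℝ) : Matrix (Fin 4) (Fin 4) ℂ :=
  !![1, 0, 0, 0;
     0, (Real.cos (ω / 2) : ℂ), -Complex.I * Complex.exp (Complex.I * θ) * (Real.sin (ω / 2) : ℂ), 0;
     0, -Complex.I * Complex.exp (-Complex.I * θ) * (Real.sin (ω / 2) : ℂ), (Real.cos (ω / 2) : ℂ), 0;
     0, 0, 0, 1]

/-- The 4×4 matrix `R(α) = -diag(e^{-iα/2}, e^{iα/2}, e^{-iα/2}, e^{-iα/2})`. -/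
noncomputable def Rmat (α : ℝ) : Matrix (Fin 4) (Fin 4) ℂ :=
  -(Matrix.diagonal ![Complex.exp (-Complex.I * α / 2), Complex.exp (Complex.I * α / 2),
      Complex.exp (-Complex.I * α / 2), Complex.exp (-Complex.I * α / 2)])

/-
`A(π/2)` and `A(-π/2)` are the real rotations by `±ω/2` in the plane of the two middle
coordinates, and the phase `e^{-iα/2}` turns `R(α)` into `-diag(z, 1, z, z)` with `z = e^{-iα}`.
Conjugating that diagonal matrix by the rotation produces the entries `(1 - z) sin²(ω/2) - 1`,
`(1 - z) sin(ω/2) cos(ω/2)` and `(1 - z) cos²(ω/2) - 1`, which are those of `C(α)` by the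
half-angle formulas.
-/

def middleRotation {R : Type*} [Ring R] (c s : R) : Matrix (Fin 4) (Fin 4) R :=
  !![1, 0, 0, 0;
     0, c, s, 0;
     0, -s, c, 0;
     0, 0, 0, 1]

theorem middleRotation_mul_neg_diagonal_mul_middleRotation_neg {R : Type*} [CommRing R]
    (c s z : R) (hcs : c ^ 2 + s ^ 2 = 1) :
    middleRotation c s * -diagonal ![z, 1, z, z] * middleRotation c (-s) =
      !![-z, 0, 0, 0;
         0, (1 - z) * s ^ 2 - 1, (1 - z) * (s * c), 0;
         0, (1 - z) * (s * c), (1 - z) * c ^ 2 - 1, 0;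
         0, 0, 0, -z] := by
  ext i j
  fin_cases i <;> fin_cases j <;>
    simp only [Matrix.mul_apply, Fin.sum_univ_four] <;>
    simp [middleRotation] <;>
    grind

theorem exp_I_mul_pi_div_two : Complex.exp (Complex.I * (Real.pi / 2)) = Complex.I := by
  rw [mul_comm, Complex.exp_pi_div_two_mul_I]

theorem Amat_pi_div_two (ω : ℝ) :
    Amat ω (Real.pi / 2) = middleRotation (Real.cos (ω / 2) : ℂ) (Real.sin (ω / 2)) := by
  ext i j
  fin_cases i <;> fin_cases j <;>
    simp [Amat, middleRotation, Complex.exp_neg, exp_I_mul_pi_div_two]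

theorem Amat_neg_pi_div_two (ω : ℝ) :
    Amat ω (-(Real.pi / 2)) = middleRotation (Real.cos (ω / 2) : ℂ) (-Real.sin (ω / 2)) := by
  ext i j
  fin_cases i <;> fin_cases j <;>
    simp [Amat, middleRotation, Complex.exp_neg, exp_I_mul_pi_div_two]

theorem exp_smul_Rmat (α : ℝ) :
    Complex.exp (-Complex.I * α / 2) • Rmat α =
      -diagonal ![Complex.exp (-Complex.I * α), 1, Complex.exp (-Complex.I * α),
        Complex.exp (-Complex.I * α)] := by
  rw [Rmat, smul_neg, ← diagonal_smul]
  congr 2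
  ext i
  fin_cases i <;> simp [← Complex.exp_add, neg_div] <;> ring_nf

theorem Cmat_eq_half_angle (ω α : ℝ) :
    Cmat ω α =
      let z := Complex.exp (-Complex.I * α)
      let c : ℂ := Real.cos (ω / 2)
      let s : ℂ := Real.sin (ω / 2)
      !![-z, 0, 0, 0;
         0, (1 - z) * s ^ 2 - 1, (1 - z) * (s * c), 0;
         0, (1 - z) * (s * c), (1 - z) * c ^ 2 - 1, 0;
         0, 0, 0, -z] := by
  have hcos : Complex.cos ω = 2 * Complex.cos (ω / 2) ^ 2 - 1 := by
    rw [← Complex.cos_two_mul]; ring_nf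
  have hsin : Complex.sin ω = 2 * Complex.sin (ω / 2) * Complex.cos (ω / 2) := by
    rw [← Complex.sin_two_mul]; ring_nf
  have hsc := Complex.sin_sq_add_cos_sq (ω / 2)
  ext i j
  fin_cases i <;> fin_cases j <;> simp [Cmat, hcos, hsin] <;> grind

theorem stmt_12 (ω α : ℝ) :
    Cmat ω α = Complex.exp (-Complex.I * α / 2) •
      (Amat ω (Real.pi / 2) * Rmat α * Amat ω (-(Real.pi / 2))) := by
  rw [Amat_pi_div_two, Amat_neg_pi_div_two, ← Matrix.smul_mul, ← Matrix.mul_smul, exp_smul_Rmat,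
    middleRotation_mul_neg_diagonal_mul_middleRotation_neg _ _ _
      (by exact_mod_cast Real.cos_sq_add_sin_sq (ω / 2))]
  exact Cmat_eq_half_angle ω α
end

section
/- Let ε ∈ (0,1], let N_l, n_l be positive integers with n_l ≤ N_l, and let h be an integer with h ≥ ln(2/√ε)·√(N_l/n_l). Then cosh((1/h)·arcosh(1/√ε))·√(1 - n_l/N_l) ≤ 1, and hence ε·T_h²(cosh((1/h)·arcosh(1/√ε))·√(1 - n_l/N_l)) ≤ ε. -/
lemma sinh_le_mul_cosh {u : ℝ} (hu : 0 ≤ u) : Real.sinh u ≤ u * Real.cosh u := by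
  have key : MonotoneOn (fun u : ℝ => u * Real.cosh u - Real.sinh u) (Set.Ici 0) := by
    apply monotoneOn_of_deriv_nonneg (convex_Ici 0)
    · fun_prop
    · fun_prop
    · intro x hx
      simp only [interior_Ici, Set.mem_Ioi] at hx
      have : deriv (fun u : ℝ => u * Real.cosh u - Real.sinh u) x = x * Real.sinh x := by
        rw [deriv_fun_sub (by fun_prop) (by fun_prop), deriv_fun_mul (by fun_prop) (by fun_prop)]
        simp
      rw [this]
      exact mul_nonneg hx.le (Real.sinh_nonneg_iff.2 hx.le)
  have := key (Set.self_mem_Ici) (Set.mem_Ici.2 hu) hu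
  simpa using this

theorem stmt_18 (ε : ℝ) (hε : ε ∈ Set.Ioc (0 : ℝ) 1) (Nl nl : ℕ) (hnl : 0 < nl)
    (hNl : 0 < Nl) (hle : nl ≤ Nl) (h : ℕ)
    (hstep : Real.log (2 / Real.sqrt ε) * Real.sqrt ((Nl : ℝ) / nl) ≤ (h : ℝ)) :
    Real.cosh ((1 / (h : ℝ)) * arcosh (1 / Real.sqrt ε)) *
        Real.sqrt (1 - (nl : ℝ) / Nl) ≤ 1 ∧
    ε * ((Polynomial.Chebyshev.T ℝ h).eval
        (Real.cosh ((1 / (h : ℝ)) * arcosh (1 / Real.sqrt ε)) *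
          Real.sqrt (1 - (nl : ℝ) / Nl))) ^ 2 ≤ ε := by
  obtain ⟨hε0, hε1⟩ := hε
  have hsε : 0 < Real.sqrt ε := Real.sqrt_pos.2 hε0
  have hsε1 : Real.sqrt ε ≤ 1 := by
    rw [show (1:ℝ) = Real.sqrt 1 by simp]; exact Real.sqrt_le_sqrt hε1
  set z : ℝ := 1 / Real.sqrt ε with hz
  have hz1 : 1 ≤ z := by rw [hz, le_div_iff₀ hsε]; linarith
  have hz0 : 0 ≤ z := by linarith
  -- bounds on arcosh z
  have ha0 : 0 ≤ arcosh z := by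
    apply Real.log_nonneg
    have : 0 ≤ Real.sqrt (z ^ 2 - 1) := Real.sqrt_nonneg _
    linarith
  have haL : arcosh z ≤ Real.log (2 / Real.sqrt ε) := by
    have h2z : (2:ℝ) / Real.sqrt ε = 2 * z := by rw [hz]; ring
    rw [h2z]
    apply Real.log_le_log (by positivity)
    have : Real.sqrt (z ^ 2 - 1) ≤ z := by
      calc Real.sqrt (z ^ 2 - 1) ≤ Real.sqrt (z ^ 2) := Real.sqrt_le_sqrt (by nlinarith)
        _ = z := Real.sqrt_sq hz0
    linarith
  have hL0 : 0 < Real.log (2 / Real.sqrt ε) := by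
    apply Real.log_pos
    rw [lt_div_iff₀ hsε]; linarith
  -- s = sqrt(n/N)
  have hnl' : (0:ℝ) < nl := by exact_mod_cast hnl
  have hNl' : (0:ℝ) < Nl := by exact_mod_cast hNl
  have hle' : (nl:ℝ) ≤ Nl := by exact_mod_cast hle
  set s : ℝ := Real.sqrt ((nl:ℝ) / Nl) with hs
  have hs0 : 0 < s := Real.sqrt_pos.2 (by positivity)
  have hs2 : s ^ 2 = (nl:ℝ) / Nl := Real.sq_sqrt (by positivity)
  have hs1 : s ≤ 1 := by
    rw [show (1:ℝ) = Real.sqrt 1 by simp]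
    exact Real.sqrt_le_sqrt (by rw [div_le_one hNl']; exact hle')
  have hNn : Real.sqrt ((Nl:ℝ) / nl) = 1 / s := by
    rw [hs, one_div, ← Real.sqrt_inv, inv_div]
  have hh0 : (0:ℝ) < h := by
    have h1 : (1:ℝ) ≤ Real.sqrt ((Nl:ℝ)/nl) := by
      rw [show (1:ℝ) = Real.sqrt 1 by simp]
      exact Real.sqrt_le_sqrt ((one_le_div hnl').2 hle')
    nlinarith
  set u : ℝ := (1 / (h:ℝ)) * arcosh z with hu
  have hu0 : 0 ≤ u := by positivity
  have hus : u ≤ s := by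
    rw [hu]
    rw [hNn] at hstep
    rw [div_mul_eq_mul_div, one_mul, div_le_iff₀ hh0]
    have hid : Real.log (2 / Real.sqrt ε) * (1/s) * s = Real.log (2 / Real.sqrt ε) := by
      field_simp
    nlinarith [mul_le_mul_of_nonneg_right hstep hs0.le, haL]
  -- part 1
  have hcosh1 : (1:ℝ) ≤ Real.cosh u := Real.one_le_cosh u
  have hsub : 1 - (nl:ℝ)/Nl = 1 - s^2 := by rw [hs2]
  have hsinh : Real.sinh u ≤ s * Real.cosh u := by
    calc Real.sinh u ≤ u * Real.cosh u := sinh_le_mul_cosh hu0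
      _ ≤ s * Real.cosh u := by nlinarith
  have hsinh0 : 0 ≤ Real.sinh u := Real.sinh_nonneg_iff.2 hu0
  clear_value z s u
  have hsq : (Real.cosh u * Real.sqrt (1 - (nl:ℝ)/Nl)) ^ 2 ≤ 1 := by
    have hnn : (0:ℝ) ≤ 1 - (nl:ℝ)/Nl := by rw [hsub]; nlinarith
    rw [mul_pow, Real.sq_sqrt hnn, hsub]
    have hid : Real.cosh u ^ 2 - Real.sinh u ^ 2 = 1 := Real.cosh_sq_sub_sinh_sq u
    have h2 : Real.sinh u ^ 2 ≤ s ^ 2 * Real.cosh u ^ 2 := by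
      have h1 := pow_le_pow_left₀ hsinh0 hsinh 2
      rwa [mul_pow] at h1
    have expand : Real.cosh u ^ 2 * (1 - s ^ 2) =
        Real.cosh u ^ 2 - s ^ 2 * Real.cosh u ^ 2 := by ring
    rw [expand]
    linarith
  have hx0 : 0 ≤ Real.cosh u * Real.sqrt (1 - (nl:ℝ)/Nl) := by positivity
  have hx1 : Real.cosh u * Real.sqrt (1 - (nl:ℝ)/Nl) ≤ 1 :=
    (pow_le_one_iff_of_nonneg hx0 two_ne_zero).1 hsq
  refine ⟨hx1, ?_⟩
  -- part 2
  set x : ℝ := Real.cosh u * Real.sqrt (1 - (nl:ℝ)/Nl) with hxdef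
  have hcos : Real.cos (Real.arccos x) = x := Real.cos_arccos (by linarith) hx1
  rw [← hcos, Polynomial.Chebyshev.T_real_cos]
  have hc : Real.cos ((h:ℤ) * Real.arccos x) ^ 2 ≤ 1 := Real.cos_sq_le_one _
  calc ε * Real.cos ((h:ℤ) * Real.arccos x) ^ 2 ≤ ε * 1 :=
        mul_le_mul_of_nonneg_left hc hε0.le
    _ = ε := mul_one ε
end
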